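/- arXiv:2411.01371 — 2 statements merged into one kernel-verified Lean document; each statement's English description precedes it below -/
import Mathlib

section
/- Let p be a strictly positive probability mass function on a finite product space ∏_{v∈V} X_v that factorizes over the cliques of a finite simple undirected graph G on V, i.e., p(x) = ∏_{C ∈ cliques(G)} φ_C(x_C) for nonnegative clique potentials φ_C. Then for every vertex i, the coordinate X_i is conditionally independent of X_{V ∖ (N(i) ∪ {i})} given X_{N(i)}, where N(i) is the neighbor set of i in G. -/
open Finset
open scoped Classical

/-- The local Markov property for positive distributions factorizing over the cliques of an
undirected graph: `X_i` is conditionally independent of all non-neighbor variables given the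
variables of the neighborhood `N(i)` (the Markov blanket). Conditional independence is
expressed via the cross-multiplied pmf identity
`p(x_i, x_far, x_N) · p(x_N) = p(x_i, x_N) · p(x_far, x_N)`. -/
theorem markov_blanket_of_clique_factorization
    {V : Type*} [Fintype V] [DecidableEq V] (G : SimpleGraph V)
    {X : V → Type*} [∀ v, Fintype (X v)]
    (p : (∀ v, X v) → ℝ) (hpos : ∀ x, 0 < p x)
    (φ : Finset V → (∀ v, X v) → ℝ) (hφ0 : ∀ C x, 0 ≤ φ C x)
    (hφloc : ∀ C : Finset V, ∀ x x' : ∀ v, X v,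
      (∀ v ∈ C, x v = x' v) → φ C x = φ C x')
    (hfact : ∀ x, p x = ∏ C ∈ Finset.univ.filter (fun C : Finset V => G.IsClique C), φ C x) :
    ∀ (i : V) (x : ∀ v, X v),
      (p x *
        ∑ z ∈ Finset.univ.filter
            (fun z : ∀ v, X v => ∀ v ∈ G.neighborSet i, z v = x v), p z)
      = (∑ z ∈ Finset.univ.filter
            (fun z : ∀ v, X v => z i = x i ∧ ∀ v ∈ G.neighborSet i, z v = x v), p z)
        * (∑ z ∈ Finset.univ.filter
            (fun z : ∀ v, X v =>
              (∀ v ∈ G.neighborSet i, z v = x v) ∧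
              ∀ v : V, v ∉ G.neighborSet i → v ≠ i → z v = x v), p z) := by
  intro i x
  -- split p into the cliques containing i and the rest
  set f : (∀ v, X v) → ℝ :=
    fun z => ∏ C ∈ Finset.univ.filter (fun C : Finset V => G.IsClique C ∧ i ∈ C), φ C z with hf
  set g : (∀ v, X v) → ℝ :=
    fun z => ∏ C ∈ Finset.univ.filter (fun C : Finset V => G.IsClique C ∧ i ∉ C), φ C z with hg
  have hpfg : ∀ z, p z = f z * g z := by
    intro z
    rw [hfact, hf, hg]
    rw [← Finset.prod_filter_mul_prod_filter_not
      (Finset.univ.filter (fun C : Finset V => G.IsClique C)) (fun C => i ∈ C)]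
    congr 1 <;> simp [Finset.filter_filter]
  have hflocal : ∀ z z' : ∀ v, X v, z i = z' i → (∀ v ∈ G.neighborSet i, z v = z' v) →
      f z = f z' := by
    intro z z' hi hn
    refine Finset.prod_congr rfl ?_
    intro C hC
    simp only [Finset.mem_filter, Finset.mem_univ, true_and] at hC
    refine hφloc C z z' ?_
    intro v hv
    by_cases hvi : v = i
    · subst hvi; exact hi
    · refine hn v ?_
      have hadj : G.Adj v i := hC.1 (Finset.mem_coe.mpr hv) (Finset.mem_coe.mpr hC.2) hvi
      exact hadj.symm
  have hglocal : ∀ z z' : ∀ v, X v, (∀ v, v ≠ i → z v = z' v) → g z = g z' := by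
    intro z z' h
    refine Finset.prod_congr rfl ?_
    intro C hC
    simp only [Finset.mem_filter, Finset.mem_univ, true_and] at hC
    refine hφloc C z z' ?_
    intro v hv
    refine h v ?_
    rintro rfl
    exact hC.2 hv
  have hNi : ∀ v ∈ G.neighborSet i, v ≠ i := by
    intro v hv
    exact (G.ne_of_adj hv).symm
  -- the key pointwise identity
  have key : ∀ z : ∀ v, X v, (∀ v ∈ G.neighborSet i, z v = x v) →
      p x * p z = p (Function.update z i (x i)) * p (Function.update x i (z i)) := by
    intro z hz
    have h1 : f (Function.update z i (x i)) = f x := by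
      refine hflocal _ _ (by simp) ?_
      intro v hv
      rw [Function.update_of_ne (hNi v hv)]
      exact hz v hv
    have h2 : g (Function.update z i (x i)) = g z := by
      refine hglocal _ _ ?_
      intro v hv
      rw [Function.update_of_ne hv]
    have h3 : f (Function.update x i (z i)) = f z := by
      refine hflocal _ _ (by simp) ?_
      intro v hv
      rw [Function.update_of_ne (hNi v hv)]
      exact (hz v hv).symm
    have h4 : g (Function.update x i (z i)) = g x := by
      refine hglocal _ _ ?_
      intro v hv
      rw [Function.update_of_ne hv]
    rw [hpfg x, hpfg z, hpfg (Function.update z i (x i)), hpfg (Function.update x i (z i)),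
      h1, h2, h3, h4]
    ring
  rw [Finset.mul_sum, Finset.sum_mul_sum]
  rw [← Finset.sum_product']
  refine Finset.sum_nbij'
    (fun z => (Function.update z i (x i), Function.update x i (z i)))
    (fun q => Function.update q.1 i (q.2 i)) ?_ ?_ ?_ ?_ ?_
  · intro z hz
    simp only [Finset.mem_filter, Finset.mem_univ, true_and] at hz
    simp only [Finset.mem_product, Finset.mem_filter, Finset.mem_univ, true_and]
    refine ⟨⟨by simp, ?_⟩, ?_, ?_⟩
    · intro v hv
      rw [Function.update_of_ne (hNi v hv)]
      exact hz v hv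
    · intro v hv
      rw [Function.update_of_ne (hNi v hv)]
    · intro v _ hvi
      rw [Function.update_of_ne hvi]
  · intro q hq
    simp only [Finset.mem_product, Finset.mem_filter, Finset.mem_univ, true_and] at hq
    simp only [Finset.mem_filter, Finset.mem_univ, true_and]
    intro v hv
    rw [Function.update_of_ne (hNi v hv)]
    exact hq.1.2 v hv
  · intro z hz
    simp only
    rw [Function.update_self, Function.update_idem, Function.update_eq_self]
  · intro q hq
    simp only [Finset.mem_product, Finset.mem_filter, Finset.mem_univ, true_and] at hq
    rw [Function.update_self, Function.update_idem]
    have h1 : Function.update q.1 i (x i) = q.1 := by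
      rw [← hq.1.1, Function.update_eq_self]
    have h2 : Function.update x i (q.2 i) = q.2 := by
      funext v
      by_cases hvi : v = i
      · subst hvi; rw [Function.update_self]
      · rw [Function.update_of_ne hvi]
        by_cases hvN : v ∈ G.neighborSet i
        · exact (hq.2.1 v hvN).symm
        · exact (hq.2.2 v hvN hvi).symm
    rw [h1, h2]
  · intro z hz
    simp only [Finset.mem_filter, Finset.mem_univ, true_and] at hz
    exact key z hz
end

section
/- Let G be a loopless mixed graph with directed, bidirected, and undirected edges that contains no partially directed cycle. Define a relation on the undirected-connected components of G by B ⪯ B' if there is a partially directed walk from some vertex of B to some vertex of B'. Then ⪯ is a partial order on the set of undirected-connected components. -/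
/-- A loopless mixed graph with directed, bidirected, and undirected edges. -/
structure MixedGraph (V : Type*) where
  dir : V → V → Prop
  bi : V → V → Prop
  undir : V → V → Prop
  bi_symm : ∀ u v, bi u v → bi v u
  undir_symm : ∀ u v, undir u v → undir v u
  dir_loopless : ∀ v, ¬ dir v v
  bi_loopless : ∀ v, ¬ bi v v
  undir_loopless : ∀ v, ¬ undir v v

namespace MixedGraph

variable {V : Type*} (G : MixedGraph V)

/-- One step of a partially directed walk: an undirected edge or a directed edge pointing
forwards. -/
def pdStep (u v : V) : Prop := G.undir u v ∨ G.dir u v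

/-- Existence of a partially directed walk from `u` to `v`. -/
def pdReach (u v : V) : Prop := Relation.ReflTransGen G.pdStep u v

/-- `G` has a partially directed cycle: a partially directed walk from some vertex to
itself containing at least one directed edge. -/
def HasPDCycle : Prop :=
  ∃ u a b : V, G.pdReach u a ∧ G.dir a b ∧ G.pdReach b u

/-- The equivalence relation 'joined by a walk of undirected edges', whose classes are the
undirected-connected components. -/
def undirSetoid : Setoid V where
  r u v := Relation.ReflTransGen G.undir u v
  iseqv := by
    refine ⟨fun _ => Relation.ReflTransGen.refl, ?_, fun h h' => h.trans h'⟩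
    intro u v h
    induction h with
    | refl => exact Relation.ReflTransGen.refl
    | tail _ hstep ih =>
        exact Relation.ReflTransGen.trans
          (Relation.ReflTransGen.single (G.undir_symm _ _ hstep)) ih

/-- The reachability relation `B ⪯ B'` on undirected-connected components: some vertex of
`B` has a partially directed walk to some vertex of `B'`. -/
def compLE : Quotient G.undirSetoid → Quotient G.undirSetoid → Prop :=
  fun B B' => ∃ u v : V, Quotient.mk G.undirSetoid u = B ∧
    Quotient.mk G.undirSetoid v = B' ∧ G.pdReach u v

end MixedGraph

/-! Since each component is connected by undirected edges, `B ⪯ B'` holds iff any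
representative of `B` reaches any representative of `B'`. For antisymmetry: if `u` reaches `v`
and back, a directed edge on the walk `u ⟶ v` would lie on a partially directed cycle, so that
walk is undirected and `u`, `v` lie in one component. -/

namespace MixedGraph

variable {V : Type*} {G : MixedGraph V} {u v : V}

lemma pdReach_of_undir (h : Relation.ReflTransGen G.undir u v) : G.pdReach u v :=
  Relation.ReflTransGen.mono (fun _ _ => Or.inl) _ _ h

lemma pdReach_undir_or_exists_dir (h : G.pdReach u v) :
    Relation.ReflTransGen G.undir u v ∨
      ∃ a b, G.pdReach u a ∧ G.dir a b ∧ G.pdReach b v := by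
  induction h with
  | refl => exact Or.inl .refl
  | @tail x y _ hxy ih =>
    rcases ih with hundir | ⟨a, b, hua, hab, hbx⟩
    · rcases hxy with hxy | hxy
      · exact Or.inl (hundir.tail hxy)
      · exact Or.inr ⟨x, y, pdReach_of_undir hundir, hxy, .refl⟩
    · exact Or.inr ⟨a, b, hua, hab, hbx.tail hxy⟩

lemma compLE_mk_iff :
    G.compLE (Quotient.mk G.undirSetoid u) (Quotient.mk G.undirSetoid v) ↔ G.pdReach u v := by
  constructor
  · rintro ⟨u', v', hu', hv', hu'v'⟩
    have huu' : Relation.ReflTransGen G.undir u u' := Quotient.exact hu'.symm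
    have hv'v : Relation.ReflTransGen G.undir v' v := Quotient.exact hv'
    exact ((pdReach_of_undir huu').trans hu'v').trans (pdReach_of_undir hv'v)
  · exact fun h => ⟨u, v, rfl, rfl, h⟩

lemma undir_of_pdReach_of_pdReach (hG : ¬ G.HasPDCycle) (huv : G.pdReach u v)
    (hvu : G.pdReach v u) : Relation.ReflTransGen G.undir u v := by
  rcases pdReach_undir_or_exists_dir huv with hundir | ⟨a, b, hua, hab, hbv⟩
  · exact hundir
  · exact absurd ⟨u, a, b, hua, hab, hbv.trans hvu⟩ hG

end MixedGraph

/-- In a loopless mixed graph with no partially directed cycle, the reachability relation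
`⪯` on undirected-connected components is a partial order. -/
theorem compLE_isPartialOrder {V : Type*} (G : MixedGraph V) (hnc : ¬ G.HasPDCycle) :
    IsPartialOrder (Quotient G.undirSetoid) G.compLE := by
  refine { refl := ?_, trans := ?_, antisymm := ?_ }
  · rintro ⟨u⟩
    exact MixedGraph.compLE_mk_iff.2 .refl
  · rintro ⟨u⟩ ⟨v⟩ ⟨w⟩ huv hvw
    exact MixedGraph.compLE_mk_iff.2
      ((MixedGraph.compLE_mk_iff.1 huv).trans (MixedGraph.compLE_mk_iff.1 hvw))
  · rintro ⟨u⟩ ⟨v⟩ huv hvu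
    exact Quotient.sound <| MixedGraph.undir_of_pdReach_of_pdReach hnc
      (MixedGraph.compLE_mk_iff.1 huv) (MixedGraph.compLE_mk_iff.1 hvu)
end
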